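/- For every continuous φ : ℝ → ℝ, every continuous ε : ℝ → ℝ with ε > 0 everywhere, and every integer n > 3, there exists a C⁴ function y : ℝ → ℝ satisfying y''''·(y')² - 3·y'''·y''·y' + 2(1 - n⁻²)·(y'')³ = 0 for all x, and |y(t) - φ(t)| < ε(t) for all t ∈ ℝ. -/

import Mathlib

open Real Set Filter Topology

noncomputable section
namespace Stmt16

/-- truncated power `(max t 0)^m` -/
def Q (m : ℕ) (t : ℝ) : ℝ := max t 0 ^ m

lemma Q_of_nonpos {m : ℕ} (hm : m ≠ 0) {t : ℝ} (ht : t ≤ 0) : Q m t = 0 := by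
  simp [Q, max_eq_right ht, zero_pow hm]

lemma Q_of_nonneg {m : ℕ} {t : ℝ} (ht : 0 ≤ t) : Q m t = t ^ m := by
  simp [Q, max_eq_left ht]

lemma Q_nonneg (m : ℕ) (t : ℝ) : 0 ≤ Q m t := pow_nonneg (le_max_right _ _) _

lemma hasDerivAt_Q (m : ℕ) (t : ℝ) :
    HasDerivAt (Q (m + 2)) ((m + 2 : ℝ) * Q (m + 1) t) t := by
  rcases lt_trichotomy t 0 with ht | rfl | ht
  · have h0 : Q (m + 2) =ᶠ[𝓝 t] fun _ => (0 : ℝ) := by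
      filter_upwards [Iio_mem_nhds ht] with s hs
      exact Q_of_nonpos (by omega) (le_of_lt hs)
    rw [Q_of_nonpos (by omega) ht.le, mul_zero]
    exact (hasDerivAt_const t (0 : ℝ)).congr_of_eventuallyEq h0
  · rw [Q_of_nonpos (by omega) le_rfl, mul_zero]
    rw [hasDerivAt_iff_tendsto_slope]
    have hb : ∀ s : ℝ, s ≠ 0 → |slope (Q (m + 2)) 0 s| ≤ |s| ^ (m + 1) := by
      intro s hs
      rw [slope_def_field, Q_of_nonpos (by omega) le_rfl]
      rcases le_or_gt s 0 with h | h
      · rw [Q_of_nonpos (by omega) h]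
        simp only [zero_sub, sub_zero, zero_div, abs_zero]
        positivity
      · rw [Q_of_nonneg h.le]
        simp only [sub_zero, div_eq_mul_inv]
        have : s ^ (m + 2) * s⁻¹ = s ^ (m + 1) := by
          rw [pow_succ _ (m + 1)]
          field_simp
        rw [this, abs_pow]
    have hlim : Tendsto (fun s : ℝ => |s| ^ (m + 1)) (𝓝[≠] (0:ℝ)) (𝓝 0) := by
      have : Tendsto (fun s : ℝ => |s| ^ (m + 1)) (𝓝 (0:ℝ)) (𝓝 0) := by
        have := (continuous_abs.pow (m + 1)).tendsto (0:ℝ)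
        convert this using 2
        show (0:ℝ) = |(0:ℝ)| ^ (m + 1)
        simp
        rfl
      exact this.mono_left nhdsWithin_le_nhds
    refine squeeze_zero_norm' ?_ hlim
    filter_upwards [self_mem_nhdsWithin] with s hs
    simpa [Real.norm_eq_abs] using hb s hs
  · have h0 : Q (m + 2) =ᶠ[𝓝 t] fun s => s ^ (m + 2) := by
      filter_upwards [Ioi_mem_nhds ht] with s hs
      exact Q_of_nonneg (le_of_lt hs)
    rw [Q_of_nonneg ht.le]
    have := hasDerivAt_pow (m + 2) t
    refine (HasDerivAt.congr_of_eventuallyEq ?_ h0)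
    exact this.congr_deriv (by norm_num <;> ring)

lemma deriv_Q (m : ℕ) : deriv (Q (m + 2)) = fun t => (m + 2 : ℝ) * Q (m + 1) t :=
  funext fun t => (hasDerivAt_Q m t).deriv

lemma contDiff_Q (k : ℕ) : ∀ m : ℕ, k + 1 ≤ m → ContDiff ℝ k (Q m) := by
  induction k with
  | zero =>
    intro m hm
    have : Continuous (Q m) := (continuous_id.max continuous_const).pow m
    exact (contDiff_zero.mpr this).of_le (by norm_num)
  | succ k ih =>
    intro m hm
    obtain ⟨m', rfl⟩ : ∃ m', m = m' + 2 := ⟨m - 2, by omega⟩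
    have : ((k : WithTop ℕ∞) + 1) = ((k + 1 : ℕ) : WithTop ℕ∞) := by push_cast; ring
    rw [show ((k + 1 : ℕ) : WithTop ℕ∞) = (k : WithTop ℕ∞) + 1 from by push_cast; ring,
      contDiff_succ_iff_deriv]
    refine ⟨fun t => (hasDerivAt_Q m' t).differentiableAt, by simp, ?_⟩
    rw [deriv_Q]
    exact ContDiff.mul contDiff_const (ih (m' + 1) (by omega))

/-! ### The time-change `θ` and the profile `fc = cos ∘ θ` satisfying `fc'' = -fc ^ 3` -/

def Wf (s : ℝ) : ℝ := Real.sqrt (2 / (1 + Real.cos s ^ 2))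

lemma q_pos (s : ℝ) : (0:ℝ) < 1 + Real.cos s ^ 2 := by positivity

lemma q_le_two (s : ℝ) : 1 + Real.cos s ^ 2 ≤ 2 := by
  have := Real.neg_one_le_cos s
  have := Real.cos_le_one s
  nlinarith [Real.cos_le_one s, Real.neg_one_le_cos s]

lemma one_le_Wf (s : ℝ) : 1 ≤ Wf s := by
  have h : (1:ℝ) ≤ 2 / (1 + Real.cos s ^ 2) := by
    rw [le_div_iff₀ (q_pos s)]; linarith [q_le_two s]
  calc (1:ℝ) = Real.sqrt 1 := Real.sqrt_one.symm
  _ ≤ Wf s := Real.sqrt_le_sqrt h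

lemma Wf_pos (s : ℝ) : 0 < Wf s := lt_of_lt_of_le one_pos (one_le_Wf s)

lemma contDiff_Wf (k : ℕ) : ContDiff ℝ k Wf := by
  rw [contDiff_iff_contDiffAt]
  intro s
  have h1 : ContDiffAt ℝ k (fun s => 2 / (1 + Real.cos s ^ 2)) s := by
    apply ContDiffAt.div contDiffAt_const
    · exact ((contDiff_const.add ((Real.contDiff_cos).pow 2)).contDiffAt)
    · exact ne_of_gt (q_pos s)
  exact (Real.contDiffAt_sqrt (ne_of_gt (by positivity))).comp s h1

lemma continuous_Wf : Continuous Wf := (contDiff_Wf 0).continuous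

def Xf (t : ℝ) : ℝ := ∫ s in (0:ℝ)..t, Wf s

lemma hasDerivAt_Xf (t : ℝ) : HasDerivAt Xf (Wf t) t :=
  (continuous_Wf.integral_hasStrictDerivAt 0 t).hasDerivAt

lemma strictMono_Xf : StrictMono Xf := by
  apply strictMono_of_deriv_pos
  intro t
  rw [(hasDerivAt_Xf t).deriv]
  exact Wf_pos t

lemma Xf_zero : Xf 0 = 0 := intervalIntegral.integral_same

lemma le_Xf (t : ℝ) (ht : 0 ≤ t) : t ≤ Xf t := by
  have : ∫ s in (0:ℝ)..t, (1:ℝ) ≤ ∫ s in (0:ℝ)..t, Wf s := by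
    apply intervalIntegral.integral_mono_on ht
    · exact intervalIntegrable_const
    · exact continuous_Wf.intervalIntegrable _ _
    · intro s _; exact one_le_Wf s
  simpa [Xf] using this

lemma Xf_le (t : ℝ) (ht : t ≤ 0) : Xf t ≤ t := by
  have : ∫ s in t..(0:ℝ), (1:ℝ) ≤ ∫ s in t..(0:ℝ), Wf s := by
    apply intervalIntegral.integral_mono_on ht
    · exact intervalIntegrable_const
    · exact continuous_Wf.intervalIntegrable _ _
    · intro s _; exact one_le_Wf s
  have h2 : ∫ s in t..(0:ℝ), Wf s = - Xf t := by
    rw [Xf, ← intervalIntegral.integral_symm]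
  simp at this
  rw [h2] at this
  linarith

lemma continuous_Xf : Continuous Xf :=
  continuous_iff_continuousAt.mpr fun t => (hasDerivAt_Xf t).differentiableAt.continuousAt

lemma Xf_surj : Function.Surjective Xf := by
  apply Continuous.surjective
  · exact continuous_Xf
  · exact tendsto_atTop_mono' atTop
      (by filter_upwards [eventually_ge_atTop (0:ℝ)] with t ht; exact le_Xf t ht) tendsto_id
  · exact tendsto_atBot_mono' atBot
      (by filter_upwards [eventually_le_atBot (0:ℝ)] with t ht; exact Xf_le t ht) tendsto_id

def θiso : ℝ ≃o ℝ := StrictMono.orderIsoOfSurjective Xf strictMono_Xf Xf_surj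

def θ : ℝ → ℝ := fun x => θiso.symm x

lemma Xf_θ (x : ℝ) : Xf (θ x) = x := θiso.apply_symm_apply x

lemma θ_Xf (t : ℝ) : θ (Xf t) = t := θiso.symm_apply_apply t

lemma continuous_θ : Continuous θ := θiso.symm.continuous

lemma strictMono_θ : StrictMono θ := fun a b h => θiso.symm.strictMono h

def Hf (s : ℝ) : ℝ := Real.sqrt ((1 + Real.cos s ^ 2) / 2)

lemma Hf_pos (s : ℝ) : 0 < Hf s := Real.sqrt_pos.mpr (by positivity)

lemma Wf_inv (s : ℝ) : (Wf s)⁻¹ = Hf s := by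
  rw [Wf, Hf, ← Real.sqrt_inv, inv_div]

lemma contDiff_Hf (k : ℕ) : ContDiff ℝ k Hf := by
  rw [contDiff_iff_contDiffAt]
  intro s
  have h1 : ContDiffAt ℝ k (fun s => (1 + Real.cos s ^ 2) / 2) s :=
    ((contDiff_const.add ((Real.contDiff_cos).pow 2)).div_const 2).contDiffAt
  exact (Real.contDiffAt_sqrt (ne_of_gt (by positivity))).comp s h1

lemma hasDerivAt_θ (x : ℝ) : HasDerivAt θ (Hf (θ x)) x := by
  have h := HasDerivAt.of_local_left_inverse (continuous_θ.continuousAt)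
    (hasDerivAt_Xf (θ x)) (ne_of_gt (Wf_pos (θ x)))
    (Filter.Eventually.of_forall Xf_θ)
  rwa [Wf_inv] at h

lemma deriv_θ : deriv θ = fun x => Hf (θ x) := funext fun x => (hasDerivAt_θ x).deriv

lemma contDiff_θ (k : ℕ) : ContDiff ℝ k θ := by
  induction k with
  | zero => exact (contDiff_zero.mpr continuous_θ).of_le (by norm_num)
  | succ k ih =>
    rw [show ((k + 1 : ℕ) : WithTop ℕ∞) = (k : WithTop ℕ∞) + 1 from by push_cast; ring,
      contDiff_succ_iff_deriv]
    refine ⟨fun x => (hasDerivAt_θ x).differentiableAt, by simp, ?_⟩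
    rw [deriv_θ]
    exact (contDiff_Hf k).comp ih

def fc : ℝ → ℝ := fun x => Real.cos (θ x)

def fc1 : ℝ → ℝ := fun x => -Real.sin (θ x) * Hf (θ x)

lemma contDiff_fc (k : ℕ) : ContDiff ℝ k fc := (Real.contDiff_cos.of_le le_top).comp (contDiff_θ k)

lemma hasDerivAt_fc (x : ℝ) : HasDerivAt fc (fc1 x) x := by
  have h := (Real.hasDerivAt_cos (θ x)).comp x (hasDerivAt_θ x)
  exact h

lemma hasDerivAt_fc1 (x : ℝ) : HasDerivAt fc1 (-(fc x) ^ 3) x := by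
  set s := θ x with hs
  have hq : HasDerivAt (fun x => (1 + Real.cos (θ x) ^ 2) / 2)
      ((-Real.cos s * Real.sin s) * Hf s) x := by
    have h1 : HasDerivAt (fun t : ℝ => (1 + Real.cos t ^ 2) / 2)
        (-Real.cos s * Real.sin s) s := by
      have := ((Real.hasDerivAt_cos s).pow 2).const_add 1
      have h2 := this.div_const 2
      exact h2.congr_deriv (by ring)
    exact h1.comp x (hasDerivAt_θ x)
  have hsq : HasDerivAt (fun x => Hf (θ x))
      (1 / (2 * Hf s) * ((-Real.cos s * Real.sin s) * Hf s)) x := by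
    have h0 : (1 + Real.cos s ^ 2) / 2 ≠ 0 := by positivity
    exact (Real.hasDerivAt_sqrt h0).comp x hq
  have hsin : HasDerivAt (fun x => -Real.sin (θ x)) (-(Real.cos s * Hf s)) x := by
    have := ((Real.hasDerivAt_sin s).comp x (hasDerivAt_θ x)).neg
    exact this
  have hmul := hsin.mul hsq
  have hHf : Hf s ≠ 0 := ne_of_gt (Hf_pos s)
  have heq : (-(Real.cos s * Hf s)) * Hf s +
      (-Real.sin s) * (1 / (2 * Hf s) * ((-Real.cos s * Real.sin s) * Hf s))
      = -(fc x) ^ 3 := by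
    have hHsq : Hf s * Hf s = (1 + Real.cos s ^ 2) / 2 :=
      Real.mul_self_sqrt (le_of_lt (by positivity : (0:ℝ) < (1 + Real.cos s ^ 2) / 2))
    have hsin2 : Real.sin s ^ 2 = 1 - Real.cos s ^ 2 := by
      have := Real.sin_sq_add_cos_sq s; linarith
    have h2 : (-Real.sin s) * (1 / (2 * Hf s) * ((-Real.cos s * Real.sin s) * Hf s))
        = Real.sin s ^ 2 * Real.cos s / 2 := by
      field_simp
    rw [h2]
    simp only [fc, ← hs]
    linear_combination (-Real.cos s) * hHsq + (Real.cos s / 2) * hsin2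
  rw [heq] at hmul
  exact hmul

/-! ### Key points -/

def K0 : ℝ := Xf (-(3 * π / 2))
def K1 : ℝ := Xf (-(π / 2))
def K2 : ℝ := Xf (π / 2)
def K3 : ℝ := Xf (3 * π / 2)

lemma θ_K1 : θ K1 = -(π / 2) := θ_Xf _
lemma θ_K2 : θ K2 = π / 2 := θ_Xf _

lemma K_lt : K0 < K1 ∧ K1 < 0 ∧ (0:ℝ) < K2 ∧ K2 < K3 := by
  have hπ := Real.pi_pos
  refine ⟨strictMono_Xf (by linarith), ?_, ?_, strictMono_Xf (by linarith)⟩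
  · rw [show (0:ℝ) = Xf 0 from Xf_zero.symm]; exact strictMono_Xf (by linarith)
  · rw [show (0:ℝ) = Xf 0 from Xf_zero.symm]; exact strictMono_Xf (by linarith)

lemma K0_lt_K1 : K0 < K1 := K_lt.1
lemma K1_lt_K2 : K1 < K2 := lt_trans K_lt.2.1 K_lt.2.2.1
lemma K2_lt_K3 : K2 < K3 := K_lt.2.2.2

lemma fc_pos_on {x : ℝ} (hx : x ∈ Ioo K1 K2) : 0 < fc x := by
  apply Real.cos_pos_of_mem_Ioo
  constructor
  · rw [← θ_K1]; exact strictMono_θ hx.1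
  · rw [← θ_K2]; exact strictMono_θ hx.2

lemma fc_nonpos_right {x : ℝ} (h1 : K2 ≤ x) (h2 : x ≤ K3) : fc x ≤ 0 := by
  apply Real.cos_nonpos_of_pi_div_two_le_of_le
  · rw [← θ_K2]; exact strictMono_θ.monotone h1
  · have : θ x ≤ 3 * π / 2 := by
      rw [show (3 * π / 2 : ℝ) = θ K3 from (θ_Xf _).symm]
      exact strictMono_θ.monotone h2
    linarith
lemma fc_nonpos_left {x : ℝ} (h1 : K0 ≤ x) (h2 : x ≤ K1) : fc x ≤ 0 := by
  have hθ1 : -(3 * π / 2) ≤ θ x := by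
    rw [show (-(3 * π / 2) : ℝ) = θ K0 from (θ_Xf _).symm]
    exact strictMono_θ.monotone h1
  have hθ2 : θ x ≤ -(π / 2) := by rw [← θ_K1]; exact strictMono_θ.monotone h2
  rw [fc, ← Real.cos_neg]
  apply Real.cos_nonpos_of_pi_div_two_le_of_le <;> linarith

/-! ### The compactly supported derivative profile and its derivatives -/

section M
variable (M : ℕ)

def uf : ℝ → ℝ := fun x => if x ∈ Ioo K1 K2 then fc x ^ (M + 4) else 0

def g0 : ℝ → ℝ := fun x => Q (M + 4) (fc x)
def g1 : ℝ → ℝ := fun x => (M + 4 : ℝ) * Q (M + 3) (fc x) * fc1 x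
def g2 : ℝ → ℝ := fun x =>
  (M + 4 : ℝ) * (M + 3) * Q (M + 2) (fc x) * fc1 x ^ 2
    - (M + 4 : ℝ) * Q (M + 3) (fc x) * fc x ^ 3
def g3 : ℝ → ℝ := fun x =>
  (M + 4 : ℝ) * (M + 3) * (M + 2) * Q (M + 1) (fc x) * fc1 x ^ 3
    - 3 * (M + 4 : ℝ) * (M + 3) * Q (M + 2) (fc x) * fc1 x * fc x ^ 3
    - 3 * (M + 4 : ℝ) * Q (M + 3) (fc x) * fc x ^ 2 * fc1 x

lemma hasDerivAt_Qfc (m : ℕ) (x : ℝ) :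
    HasDerivAt (fun x => Q (m + 2) (fc x)) ((m + 2 : ℝ) * Q (m + 1) (fc x) * fc1 x) x := by
  have h := (hasDerivAt_Q m (fc x)).comp x (hasDerivAt_fc x)
  exact h

lemma hasDerivAt_g0 (x : ℝ) : HasDerivAt (g0 M) (g1 M x) x := by
  have h := hasDerivAt_Qfc (M + 2) x
  have e1 : M + 2 + 2 = M + 4 := by ring
  have e2 : M + 2 + 1 = M + 3 := by ring
  rw [e1, e2] at h
  refine h.congr_deriv ?_
  simp only [g1]; push_cast; ring

lemma hasDerivAt_g1 (x : ℝ) : HasDerivAt (g1 M) (g2 M x) x := by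
  have hq := hasDerivAt_Qfc (M + 1) x
  have e1 : M + 1 + 2 = M + 3 := by ring
  have e2 : M + 1 + 1 = M + 2 := by ring
  rw [e1, e2] at hq
  push_cast at hq
  have h := ((hq.const_mul (M + 4 : ℝ)).mul (hasDerivAt_fc1 x))
  refine h.congr_deriv ?_
  simp only [g2, g1]; push_cast; ring

lemma hasDerivAt_g2 (x : ℝ) : HasDerivAt (g2 M) (g3 M x) x := by
  have hqA := hasDerivAt_Qfc M x
  have hqB := hasDerivAt_Qfc (M + 1) x
  have e1 : M + 1 + 2 = M + 3 := by ring
  have e2 : M + 1 + 1 = M + 2 := by ring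
  rw [e1, e2] at hqB
  push_cast at hqA hqB
  have hfc3 : HasDerivAt (fun x => fc x ^ 3) (3 * fc x ^ 2 * fc1 x) x := by
    have := (hasDerivAt_fc x).pow 3
    exact this.congr_deriv (by norm_num <;> ring)
  have hfc1sq : HasDerivAt (fun x => fc1 x ^ 2) (2 * fc1 x * (-(fc x) ^ 3)) x := by
    have := (hasDerivAt_fc1 x).pow 2
    exact this.congr_deriv (by norm_num <;> ring)
  have hA : HasDerivAt (fun x => (M + 4 : ℝ) * (M + 3) * Q (M + 2) (fc x) * fc1 x ^ 2)
      (((M + 4 : ℝ) * (M + 3) * ((M + 2 : ℝ) * Q (M + 1) (fc x) * fc1 x)) * fc1 x ^ 2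
        + ((M + 4 : ℝ) * (M + 3) * Q (M + 2) (fc x)) * (2 * fc1 x * (-(fc x) ^ 3))) x := by
    have := ((hqA.const_mul ((M + 4 : ℝ) * (M + 3))).mul hfc1sq)
    exact this.congr_deriv (by ring)
  have hB : HasDerivAt (fun x => (M + 4 : ℝ) * Q (M + 3) (fc x) * fc x ^ 3)
      (((M + 4 : ℝ) * ((M + 3 : ℝ) * Q (M + 2) (fc x) * fc1 x)) * fc x ^ 3
        + ((M + 4 : ℝ) * Q (M + 3) (fc x)) * (3 * fc x ^ 2 * fc1 x)) x := by
    have := ((hqB.const_mul ((M + 4 : ℝ))).mul hfc3)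
    exact this.congr_deriv (by ring)
  have h := hA.sub hB
  refine h.congr_deriv ?_
  simp only [g3]; push_cast; ring

lemma EQzero (x : ℝ) :
    g3 M x * (g0 M x) ^ 2 - 3 * g2 M x * g1 M x * g0 M x
      + 2 * (1 - (((M : ℝ) + 4) ^ 2)⁻¹) * (g1 M x) ^ 3 = 0 := by
  rcases le_or_gt (fc x) 0 with h | h
  · simp only [g0, g1, g2, g3, Q_of_nonpos (by omega : M + 4 ≠ 0) h,
      Q_of_nonpos (by omega : M + 3 ≠ 0) h, Q_of_nonpos (by omega : M + 2 ≠ 0) h,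
      Q_of_nonpos (by omega : M + 1 ≠ 0) h]
    ring
  · have hc : ((M : ℝ) + 4) ≠ 0 := by positivity
    have hcoef : 2 * (1 - (((M : ℝ) + 4) ^ 2)⁻¹) * ((M : ℝ) + 4) ^ 3
        = 2 * ((M : ℝ) + 4) ^ 3 - 2 * ((M : ℝ) + 4) := by
      field_simp
    simp only [g0, g1, g2, g3, Q_of_nonneg h.le]
    have h2 : (((M : ℝ) + 4) ^ 2) ≠ 0 := by positivity
    field_simp
    push_cast
    ring

/-! ### The step function `Sf` -/

lemma uf_eq_on {x : ℝ} (hx : x ∈ Ioo K0 K3) : uf M x = g0 M x := by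
  by_cases h12 : x ∈ Ioo K1 K2
  · rw [uf, if_pos h12, g0, Q_of_nonneg (fc_pos_on h12).le]
  · rw [uf, if_neg h12, g0]
    have hle : fc x ≤ 0 := by
      rcases le_or_gt x K1 with h | h
      · exact fc_nonpos_left hx.1.le h
      · have : K2 ≤ x := by
          by_contra hcon
          exact h12 ⟨h, lt_of_not_ge hcon⟩
        exact fc_nonpos_right this hx.2.le
    rw [Q_of_nonpos (by omega) hle]

lemma uf_eventually_g0 {x : ℝ} (hx : x ∈ Ioo K0 K3) : uf M =ᶠ[𝓝 x] g0 M := by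
  filter_upwards [Ioo_mem_nhds hx.1 hx.2] with z hz
  exact uf_eq_on M hz

lemma uf_eventually_zero {x : ℝ} (hx : x ∉ Icc K1 K2) : uf M =ᶠ[𝓝 x] fun _ => (0:ℝ) := by
  filter_upwards [isClosed_Icc.isOpen_compl.mem_nhds hx] with z hz
  rw [uf, if_neg (fun hmem => hz (Ioo_subset_Icc_self hmem))]

lemma mem_bigIoo {x : ℝ} (hx : x ∈ Icc K1 K2) : x ∈ Ioo K0 K3 :=
  ⟨lt_of_lt_of_le K0_lt_K1 hx.1, lt_of_le_of_lt hx.2 K2_lt_K3⟩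

lemma contDiffAt_uf (x : ℝ) : ContDiffAt ℝ 3 (uf M) x := by
  by_cases hx : x ∈ Icc K1 K2
  · have hg : ContDiffAt ℝ 3 (g0 M) x :=
      ((contDiff_Q 3 (M + 4) (by omega)).comp (contDiff_fc 3)).contDiffAt
    exact hg.congr_of_eventuallyEq (uf_eventually_g0 M (mem_bigIoo hx))
  · exact contDiffAt_const.congr_of_eventuallyEq (uf_eventually_zero M hx)

lemma continuous_uf : Continuous (uf M) :=
  continuous_iff_continuousAt.mpr fun x => (contDiffAt_uf M x).continuousAt

lemma uf_nonneg (x : ℝ) : 0 ≤ uf M x := by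
  rw [uf]
  split
  · next h => exact pow_nonneg (fc_pos_on h).le _
  · exact le_rfl

def Sf : ℝ → ℝ := fun x => ∫ t in K1..x, uf M t

lemma hasDerivAt_Sf (x : ℝ) : HasDerivAt (Sf M) (uf M x) x :=
  ((continuous_uf M).integral_hasStrictDerivAt K1 x).hasDerivAt

lemma deriv_Sf : deriv (Sf M) = uf M := funext fun x => (hasDerivAt_Sf M x).deriv

lemma contDiff_Sf : ContDiff ℝ 4 (Sf M) := by
  rw [show (4 : WithTop ℕ∞) = 3 + 1 from by norm_num, contDiff_succ_iff_deriv]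
  refine ⟨fun x => (hasDerivAt_Sf M x).differentiableAt, by simp, ?_⟩
  rw [deriv_Sf]
  exact contDiff_iff_contDiffAt.mpr (contDiffAt_uf M)

lemma itD_Sf2 : ∀ x ∈ Ioo K0 K3, iteratedDeriv 2 (Sf M) x = g1 M x := by
  intro x hx
  rw [show (2:ℕ) = 1 + 1 from rfl, iteratedDeriv_succ, iteratedDeriv_one, deriv_Sf]
  rw [(uf_eventually_g0 M hx).deriv_eq]
  exact (hasDerivAt_g0 M x).deriv

lemma itD_Sf3 : ∀ x ∈ Ioo K0 K3, iteratedDeriv 3 (Sf M) x = g2 M x := by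
  intro x hx
  rw [show (3:ℕ) = 2 + 1 from rfl, iteratedDeriv_succ]
  have hev : iteratedDeriv 2 (Sf M) =ᶠ[𝓝 x] g1 M := by
    filter_upwards [Ioo_mem_nhds hx.1 hx.2] with z hz
    exact itD_Sf2 M z hz
  rw [hev.deriv_eq]
  exact (hasDerivAt_g1 M x).deriv

lemma itD_Sf4 : ∀ x ∈ Ioo K0 K3, iteratedDeriv 4 (Sf M) x = g3 M x := by
  intro x hx
  rw [show (4:ℕ) = 3 + 1 from rfl, iteratedDeriv_succ]
  have hev : iteratedDeriv 3 (Sf M) =ᶠ[𝓝 x] g2 M := by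
    filter_upwards [Ioo_mem_nhds hx.1 hx.2] with z hz
    exact itD_Sf3 M z hz
  rw [hev.deriv_eq]
  exact (hasDerivAt_g2 M x).deriv

lemma iteratedDeriv_const_succ : ∀ (k : ℕ) (c : ℝ),
    iteratedDeriv (k + 1) (fun _ : ℝ => c) = fun _ => (0:ℝ)
  | 0, c => by rw [iteratedDeriv_one]; exact deriv_const' c
  | (k + 1), c => by
    rw [iteratedDeriv_succ', show deriv (fun _ : ℝ => c) = fun _ => (0:ℝ) from deriv_const' c]
    exact iteratedDeriv_const_succ k 0

lemma iteratedDeriv_const' (k : ℕ) (hk : k ≠ 0) (c : ℝ) :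
    iteratedDeriv k (fun _ : ℝ => c) = fun _ => (0:ℝ) := by
  obtain ⟨k', rfl⟩ : ∃ k', k = k' + 1 := ⟨k - 1, by omega⟩
  exact iteratedDeriv_const_succ k' c

lemma Sf_left {z : ℝ} (hz : z ≤ K1) : Sf M z = 0 := by
  rw [Sf]
  rw [intervalIntegral.integral_congr (g := fun _ => (0:ℝ))]
  · simp
  · intro t ht
    rw [uIcc_of_ge hz] at ht
    rw [uf, if_neg]
    rintro ⟨h1, _⟩
    exact absurd ht.2 (not_le.mpr h1)

lemma Sf_right {z : ℝ} (hz : K2 ≤ z) : Sf M z = Sf M K2 := by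
  have hadd := intervalIntegral.integral_add_adjacent_intervals
    (μ := MeasureTheory.volume) (a := K1) (b := K2) (c := z)
    ((continuous_uf M).intervalIntegrable _ _) ((continuous_uf M).intervalIntegrable _ _)
  have hzero : ∫ t in K2..z, uf M t = 0 := by
    rw [intervalIntegral.integral_congr (g := fun _ => (0:ℝ))]
    · simp
    · intro t ht
      rw [uIcc_of_le hz] at ht
      rw [uf, if_neg]
      rintro ⟨_, h2⟩
      exact absurd ht.1 (not_le.mpr h2)
  rw [Sf, Sf, ← hadd, hzero, add_zero]

lemma ODE_Sf (x : ℝ) :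
    iteratedDeriv 4 (Sf M) x * (deriv (Sf M) x) ^ 2
      - 3 * iteratedDeriv 3 (Sf M) x * iteratedDeriv 2 (Sf M) x * deriv (Sf M) x
      + 2 * (1 - (((M : ℝ) + 4) ^ 2)⁻¹) * (iteratedDeriv 2 (Sf M) x) ^ 3 = 0 := by
  by_cases hx : x ∈ Icc K1 K2
  · have hx' := mem_bigIoo hx
    rw [deriv_Sf, uf_eq_on M hx', itD_Sf2 M x hx', itD_Sf3 M x hx', itD_Sf4 M x hx']
    exact EQzero M x
  · have hconst : ∃ c : ℝ, Sf M =ᶠ[𝓝 x] fun _ => c := by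
      rcases not_and_or.mp ((not_iff_not.mpr mem_Icc).mp hx) with h | h
      · refine ⟨0, ?_⟩
        filter_upwards [Iio_mem_nhds (lt_of_not_ge h)] with z hz
        exact Sf_left M (le_of_lt hz)
      · refine ⟨Sf M K2, ?_⟩
        filter_upwards [Ioi_mem_nhds (lt_of_not_ge h)] with z hz
        exact Sf_right M (le_of_lt hz)
    obtain ⟨c, hc⟩ := hconst
    have h2 : iteratedDeriv 2 (Sf M) x = 0 := by
      rw [hc.iteratedDeriv_eq, iteratedDeriv_const' 2 (by omega)]
    have h3 : iteratedDeriv 3 (Sf M) x = 0 := by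
      rw [hc.iteratedDeriv_eq, iteratedDeriv_const' 3 (by omega)]
    have h4 : iteratedDeriv 4 (Sf M) x = 0 := by
      rw [hc.iteratedDeriv_eq, iteratedDeriv_const' 4 (by omega)]
    rw [h2, h3, h4]
    ring

lemma Itot_pos : 0 < Sf M K2 := by
  rw [Sf]
  apply intervalIntegral.intervalIntegral_pos_of_pos_on
    ((continuous_uf M).intervalIntegrable _ _)
  · intro z hz
    rw [uf, if_pos hz]
    exact pow_pos (fc_pos_on hz) _
  · exact K1_lt_K2

lemma Sf_mono : Monotone (Sf M) := by
  apply monotone_of_deriv_nonneg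
  · exact fun x => (hasDerivAt_Sf M x).differentiableAt
  · intro x
    rw [deriv_Sf]
    exact uf_nonneg M x

lemma Sf_nonneg (x : ℝ) : 0 ≤ Sf M x := by
  rcases le_total x K1 with h | h
  · rw [Sf_left M h]
  · rw [← Sf_left M (le_refl K1)]
    exact Sf_mono M h

lemma Sf_le (x : ℝ) : Sf M x ≤ Sf M K2 := by
  rcases le_total x K2 with h | h
  · exact Sf_mono M h
  · rw [Sf_right M h]
  end M

/-! ### Iterated-derivative transport under affine images -/

lemma itD_const_add (k : ℕ) (A : ℝ) (v : ℝ → ℝ) :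
    iteratedDeriv (k + 1) (fun x => A + v x) = iteratedDeriv (k + 1) v := by
  rw [iteratedDeriv_succ', iteratedDeriv_succ', deriv_const_add']

lemma itD_const_mul (k : ℕ) : ∀ (B : ℝ) (v : ℝ → ℝ),
    iteratedDeriv k (fun x => B * v x) = fun x => B * iteratedDeriv k v x := by
  induction k with
  | zero => intro B v; simp
  | succ k ih =>
    intro B v
    rw [iteratedDeriv_succ', deriv_const_mul_field', ih B (deriv v), iteratedDeriv_succ']

/-- transport of the ODE property under affine substitutions. -/
lemma transport (w : ℝ → ℝ) (hw : ContDiff ℝ 4 w) (c : ℝ)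
    (hode : ∀ x, iteratedDeriv 4 w x * (deriv w x) ^ 2
      - 3 * iteratedDeriv 3 w x * iteratedDeriv 2 w x * deriv w x
      + c * (iteratedDeriv 2 w x) ^ 3 = 0)
    (A B l m : ℝ) :
    ContDiff ℝ 4 (fun x => A + B * w (l * x + m)) ∧
    (∀ x, iteratedDeriv 4 (fun x => A + B * w (l * x + m)) x
        * (deriv (fun x => A + B * w (l * x + m)) x) ^ 2
      - 3 * iteratedDeriv 3 (fun x => A + B * w (l * x + m)) x
        * iteratedDeriv 2 (fun x => A + B * w (l * x + m)) x
        * deriv (fun x => A + B * w (l * x + m)) x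
      + c * (iteratedDeriv 2 (fun x => A + B * w (l * x + m)) x) ^ 3 = 0) := by
  have haff : ContDiff ℝ 4 fun x : ℝ => l * x + m :=
    (contDiff_const.mul contDiff_id).add contDiff_const
  have hcomp : ContDiff ℝ 4 fun x => w (l * x + m) := hw.comp haff
  have hsm : ContDiff ℝ 4 (fun x => A + B * w (l * x + m)) :=
    contDiff_const.add (contDiff_const.mul hcomp)
  refine ⟨hsm, ?_⟩
  -- compute the iterated derivatives
  have hshift : ∀ k : ℕ, k ≤ 4 → iteratedDeriv k (fun x => w (l * x + m))
      = fun x => l ^ k * iteratedDeriv k w (l * x + m) := by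
    intro k hk
    have hk' : (k : WithTop ℕ∞) ≤ (4 : ℕ) := by exact_mod_cast hk
    have hw' : ContDiff ℝ k (fun t => w (t + m)) :=
      (hw.of_le (by exact_mod_cast hk')).comp (contDiff_id.add contDiff_const)
    have h1 : iteratedDeriv k (fun x => w (l * x + m))
        = fun x => l ^ k * iteratedDeriv k (fun t => w (t + m)) (l * x) := by
      have := iteratedDeriv_comp_const_mul hw' l
      convert this using 1
    have h2 : iteratedDeriv k (fun t => w (t + m)) = fun t => iteratedDeriv k w (t + m) :=
      iteratedDeriv_comp_add_const k w m
    rw [h1, h2]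
  have hfull : ∀ k : ℕ, 1 ≤ k → k ≤ 4 → iteratedDeriv k (fun x => A + B * w (l * x + m))
      = fun x => B * l ^ k * iteratedDeriv k w (l * x + m) := by
    intro k hk1 hk4
    obtain ⟨k', rfl⟩ : ∃ k', k = k' + 1 := ⟨k - 1, by omega⟩
    rw [itD_const_add, itD_const_mul, hshift _ hk4]
    funext x
    ring
  intro x
  have e1 : deriv (fun x => A + B * w (l * x + m)) x = B * l * iteratedDeriv 1 w (l * x + m) := by
    rw [← iteratedDeriv_one, hfull 1 le_rfl (by omega)]
    ring
  rw [e1, hfull 2 (by omega) (by omega), hfull 3 (by omega) (by omega),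
    hfull 4 (by omega) (by omega)]
  have := hode (l * x + m)
  rw [← iteratedDeriv_one] at this
  linear_combination (B ^ 3 * l ^ 6) * this

/-- The normalized monotone C⁴ step solving the ODE, flat outside `[1/4, 3/4]`. -/
theorem exists_T (M : ℕ) : ∃ T : ℝ → ℝ, ContDiff ℝ 4 T ∧
    (∀ x, iteratedDeriv 4 T x * (deriv T x) ^ 2
      - 3 * iteratedDeriv 3 T x * iteratedDeriv 2 T x * deriv T x
      + 2 * (1 - (((M : ℝ) + 4) ^ 2)⁻¹) * (iteratedDeriv 2 T x) ^ 3 = 0) ∧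
    (∀ x ≤ (1/4 : ℝ), T x = 0) ∧ (∀ x, (3/4 : ℝ) ≤ x → T x = 1) ∧
    (∀ x, T x ∈ Icc (0:ℝ) 1) := by
  set l : ℝ := 2 * (K2 - K1) with hl
  have hlpos : 0 < l := by
    have := K1_lt_K2
    rw [hl]; linarith
  set mc : ℝ := K1 - l / 4 with hmc
  set B : ℝ := (Sf M K2)⁻¹ with hB
  have hI := Itot_pos M
  have hBpos : 0 < B := inv_pos.mpr hI
  obtain ⟨hsm, hode⟩ := transport (Sf M) (contDiff_Sf M) (2 * (1 - (((M : ℝ) + 4) ^ 2)⁻¹))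
    (ODE_Sf M) 0 B l mc
  refine ⟨fun x => 0 + B * Sf M (l * x + mc), hsm, hode, ?_, ?_, ?_⟩
  · intro x hx
    have harg : l * x + mc ≤ K1 := by
      rw [hmc]
      nlinarith
    show 0 + B * Sf M (l * x + mc) = 0
    rw [Sf_left M harg]
    ring
  · intro x hx
    have harg : K2 ≤ l * x + mc := by
      rw [hmc, hl]
      nlinarith
    show 0 + B * Sf M (l * x + mc) = 1
    rw [Sf_right M harg, zero_add, hB, inv_mul_cancel₀ (ne_of_gt hI)]
  · intro x
    constructor
    · show 0 ≤ 0 + B * Sf M (l * x + mc)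
      have := Sf_nonneg M (l * x + mc)
      positivity
    · show 0 + B * Sf M (l * x + mc) ≤ 1
      rw [zero_add, hB, inv_mul_le_iff₀ hI, mul_one]
      exact Sf_le M _

/-! ### Gluing affine copies of the step along an adaptive grid -/

section glue
variable (mz : ℤ → ℕ) (φ T : ℝ → ℝ)

def jg (x : ℝ) : ℤ := ⌊(x - (⌊x⌋ : ℝ)) * (mz ⌊x⌋ : ℝ)⌋
def ag (x : ℝ) : ℝ := (⌊x⌋ : ℝ) + (jg mz x : ℝ) / (mz ⌊x⌋ : ℝ)
def bg (x : ℝ) : ℝ := ag mz x + 1 / (mz ⌊x⌋ : ℝ)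
def yg (x : ℝ) : ℝ :=
  φ (ag mz x) + (φ (bg mz x) - φ (ag mz x)) * T ((mz ⌊x⌋ : ℝ) * (x - ag mz x))

variable (hm : ∀ k, 0 < mz k)
include hm

lemma mzR_pos (k : ℤ) : (0:ℝ) < (mz k : ℝ) := by exact_mod_cast hm k
lemma one_le_mzR (k : ℤ) : (1:ℝ) ≤ (mz k : ℝ) := by exact_mod_cast hm k

lemma jg_nonneg (x : ℝ) : 0 ≤ jg mz x := by
  apply Int.floor_nonneg.mpr
  apply mul_nonneg _ (le_of_lt (mzR_pos mz hm _))
  have := Int.floor_le x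
  linarith

lemma jg_lt (x : ℝ) : jg mz x < mz ⌊x⌋ := by
  apply Int.floor_lt.mpr
  have h1 : x - (⌊x⌋ : ℝ) < 1 := by
    have := Int.lt_floor_add_one x
    linarith
  have h2 := mzR_pos mz hm ⌊x⌋
  calc (x - (⌊x⌋ : ℝ)) * (mz ⌊x⌋ : ℝ) < 1 * (mz ⌊x⌋ : ℝ) := by
        apply mul_lt_mul_of_pos_right h1 h2
  _ = ((mz ⌊x⌋ : ℤ) : ℝ) := by push_cast; ring

lemma ag_ge (x : ℝ) : (⌊x⌋ : ℝ) ≤ ag mz x := by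
  rw [ag]
  have h1 : (0:ℝ) ≤ (jg mz x : ℝ) := by exact_mod_cast jg_nonneg mz hm x
  have h2 := mzR_pos mz hm ⌊x⌋
  have : 0 ≤ (jg mz x : ℝ) / (mz ⌊x⌋ : ℝ) := div_nonneg h1 h2.le
  linarith

lemma ag_le (x : ℝ) : ag mz x ≤ x := by
  rw [ag]
  have h2 := mzR_pos mz hm ⌊x⌋
  have h1 : (jg mz x : ℝ) ≤ (x - (⌊x⌋ : ℝ)) * (mz ⌊x⌋ : ℝ) := Int.floor_le _
  rw [← le_sub_iff_add_le']
  rw [div_le_iff₀ h2]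
  linarith

lemma bg_gt (x : ℝ) : x < bg mz x := by
  rw [bg, ag]
  have h2 := mzR_pos mz hm ⌊x⌋
  have h1 : (x - (⌊x⌋ : ℝ)) * (mz ⌊x⌋ : ℝ) < (jg mz x : ℝ) + 1 := Int.lt_floor_add_one _
  rw [add_assoc, ← add_div, ← sub_lt_iff_lt_add', lt_div_iff₀ h2]
  linarith

lemma bg_le (x : ℝ) : bg mz x ≤ (⌊x⌋ : ℝ) + 1 := by
  rw [bg, ag]
  have h2 := mzR_pos mz hm ⌊x⌋
  have h1 : (jg mz x : ℝ) + 1 ≤ (mz ⌊x⌋ : ℝ) := by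
    have := jg_lt mz hm x
    have : (jg mz x : ℝ) + 1 ≤ ((mz ⌊x⌋ : ℤ) : ℝ) := by exact_mod_cast this
    push_cast at this ⊢
    linarith
  rw [add_assoc, ← add_div, add_le_add_iff_left, div_le_one h2]
  exact h1

omit hm in
lemma cellEq (x : ℝ) (k j : ℤ) (h1 : (k:ℝ) ≤ x) (h2 : x < (k:ℝ) + 1)
    (h3 : (j:ℝ) ≤ (x - (k:ℝ)) * (mz k : ℝ)) (h4 : (x - (k:ℝ)) * (mz k : ℝ) < (j:ℝ) + 1) :
    ⌊x⌋ = k ∧ jg mz x = j := by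
  have hfl : ⌊x⌋ = k := by
    rw [Int.floor_eq_iff]
    constructor
    · exact h1
    · push_cast; exact h2
  refine ⟨hfl, ?_⟩
  rw [jg, hfl, Int.floor_eq_iff]
  constructor
  · exact h3
  · push_cast; exact h4

lemma yg_loc (hT0 : ∀ x ≤ (1/4 : ℝ), T x = 0) (hT1 : ∀ x, (3/4 : ℝ) ≤ x → T x = 1)
    (x₀ : ℝ) :
    (yg mz φ T =ᶠ[𝓝 x₀] fun x => φ (ag mz x₀) + (φ (bg mz x₀) - φ (ag mz x₀)) *
        T ((mz ⌊x₀⌋ : ℝ) * x + (-((mz ⌊x₀⌋ : ℝ) * ag mz x₀)))) ∨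
    (yg mz φ T =ᶠ[𝓝 x₀] fun _ => φ x₀) := by
  set k₀ : ℤ := ⌊x₀⌋ with hk₀
  set j₀ : ℤ := jg mz x₀ with hj₀
  set mR : ℝ := (mz k₀ : ℝ) with hmRdef
  have hmR : 0 < mR := mzR_pos mz hm k₀
  have hmR1 : 1 ≤ mR := one_le_mzR mz hm k₀
  have hj₀lt : (j₀ : ℝ) ≤ mR - 1 := by
    have := jg_lt mz hm x₀
    have h' : (j₀ : ℝ) + 1 ≤ ((mz k₀ : ℤ) : ℝ) := by exact_mod_cast this
    push_cast at h'
    linarith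
  have hj₀0 : (0:ℝ) ≤ (j₀ : ℝ) := by exact_mod_cast jg_nonneg mz hm x₀
  rcases eq_or_lt_of_le (ag_le mz hm x₀) with heq | hlt
  · -- boundary case : locally constant
    right
    have hx₀eq : x₀ = (k₀ : ℝ) + (j₀ : ℝ) / mR := by rw [← heq]; rfl
    have hkey : x₀ * mR - (k₀ : ℝ) * mR = (j₀ : ℝ) := by
      rw [hx₀eq]
      field_simp
      ring
    have h14 : (1 / (4 * mR)) * mR = 1 / 4 := by field_simp
    have hmdiv : ∀ a : ℝ, a * mR / mR = a := fun a => mul_div_cancel_right₀ a (ne_of_gt hmR)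
    have hright : ∀ x, x₀ ≤ x → x < x₀ + 1 / (4 * mR) → yg mz φ T x = φ x₀ := by
      intro x hx1 hx2
      have hx2m : x * mR < (x₀ + 1 / (4 * mR)) * mR := mul_lt_mul_of_pos_right hx2 hmR
      have hexp : (x₀ + 1 / (4 * mR)) * mR = x₀ * mR + 1 / 4 := by
        rw [add_mul, h14]
      have hx1m : x₀ * mR ≤ x * mR := mul_le_mul_of_nonneg_right hx1 hmR.le
      have hrng : (x - (k₀:ℝ)) * mR = x * mR - (k₀:ℝ) * mR := by ring
      have hxk : (x - (k₀:ℝ)) * mR < (j₀ : ℝ) + 1 / 4 := by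
        rw [hrng]; linarith
      have h3 : (j₀ : ℝ) ≤ (x - (k₀:ℝ)) * mR := by rw [hrng]; linarith
      have h1 : (k₀:ℝ) ≤ x := by
        have h0 : 0 ≤ (x - (k₀:ℝ)) * mR := le_trans hj₀0 h3
        have := div_nonneg h0 hmR.le
        rw [hmdiv] at this
        linarith
      have h2 : x < (k₀:ℝ) + 1 := by
        have hlt' : (x - (k₀:ℝ)) * mR < mR := by linarith
        have := (mul_lt_iff_lt_one_left hmR).mp hlt'
        linarith
      obtain ⟨hfl, hjx⟩ := cellEq mz x k₀ j₀ h1 h2 h3 (by linarith)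
      have hagx : ag mz x = x₀ := by
        rw [ag, hfl, hjx, ← hx₀eq]
      have hTz : T ((mz ⌊x⌋ : ℝ) * (x - ag mz x)) = 0 := by
        apply hT0
        rw [hfl, hagx]
        have hd : x - x₀ < 1 / (4 * mR) := by linarith
        have := mul_lt_mul_of_pos_left hd hmR
        have he : mR * (1 / (4 * mR)) = 1 / 4 := by rw [mul_comm]; exact h14
        rw [he] at this
        have : mR * (x - x₀) ≤ 1 / 4 := le_of_lt this
        rw [← hmRdef]
        exact this
      rw [yg, hTz, hagx]
      ring
    have hleft : ∃ η : ℝ, 0 < η ∧ ∀ x, x₀ - η < x → x < x₀ → yg mz φ T x = φ x₀ := by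
      by_cases hj0 : j₀ = 0
      · -- x₀ is an integer; use the cell to the left
        have hx₀k : x₀ = (k₀ : ℝ) := by rw [hx₀eq, hj0]; simp
        set k' : ℤ := k₀ - 1 with hk'
        set mR' : ℝ := (mz k' : ℝ) with hmR'def
        have hmRp' : 0 < mR' := mzR_pos mz hm k'
        have hmR1' : 1 ≤ mR' := one_le_mzR mz hm k'
        have h14' : (1 / (4 * mR')) * mR' = 1 / 4 := by field_simp
        refine ⟨1 / (4 * mR'), by positivity, ?_⟩
        intro x hx1 hx2
        have hk'c : ((k' : ℤ) : ℝ) = (k₀ : ℝ) - 1 := by rw [hk']; push_cast; ring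
        have hsmall : 1 / (4 * mR') ≤ 1 / 4 := by
          rw [div_le_div_iff₀ (by positivity) (by norm_num)]
          linarith
        rw [hx₀k] at hx1 hx2
        have h1 : (k' : ℝ) ≤ x := by rw [hk'c]; linarith
        have h2 : x < (k' : ℝ) + 1 := by rw [hk'c]; linarith
        have hd : 1 - 1 / (4 * mR') < x - (k' : ℝ) := by rw [hk'c]; linarith
        have hdm := mul_lt_mul_of_pos_right hd hmRp'
        have hexp' : (1 - 1 / (4 * mR')) * mR' = mR' - 1 / 4 := by
          rw [sub_mul, h14', one_mul]
        rw [hexp'] at hdm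
        have h3 : (((mz k' : ℤ) - 1 : ℤ) : ℝ) ≤ (x - (k' : ℝ)) * mR' := by
          push_cast
          rw [← hmR'def]
          linarith
        have hx1' : x - (k' : ℝ) < 1 := by rw [hk'c]; linarith
        have hx1m' := mul_lt_mul_of_pos_right hx1' hmRp'
        rw [one_mul] at hx1m'
        have h4 : (x - (k' : ℝ)) * mR' < (((mz k' : ℤ) - 1 : ℤ) : ℝ) + 1 := by
          push_cast
          rw [← hmR'def]
          linarith
        obtain ⟨hfl, hjx⟩ := cellEq mz x k' ((mz k' : ℤ) - 1) h1 h2 h3 h4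
        have hagx : ag mz x = (k' : ℝ) + (mR' - 1) / mR' := by
          rw [ag, hfl, hjx]
          push_cast
          rw [← hmR'def]
        have hbgx : bg mz x = x₀ := by
          rw [bg, hfl, hagx, add_assoc, ← add_div,
            sub_add_cancel, div_self (ne_of_gt hmRp'), hx₀k, hk'c]
          ring
        have hTone : T ((mz ⌊x⌋ : ℝ) * (x - ag mz x)) = 1 := by
          apply hT1
          rw [hfl, hagx, ← hmR'def]
          have hexp2 : mR' * (x - ((k' : ℝ) + (mR' - 1) / mR'))
              = (x - (k' : ℝ)) * mR' - (mR' - 1) := by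
            field_simp
            ring
          rw [hexp2]
          linarith
        rw [yg, hTone, hbgx]
        ring
      · -- interior grid point
        have hj1 : (1:ℝ) ≤ (j₀ : ℝ) := by
          have h0 := jg_nonneg mz hm x₀
          rw [← hj₀] at h0
          have : (1:ℤ) ≤ j₀ := by omega
          exact_mod_cast this
        refine ⟨1 / (4 * mR), by positivity, ?_⟩
        intro x hx1 hx2
        have hrng : (x - (k₀:ℝ)) * mR = x * mR - (k₀:ℝ) * mR := by ring
        have hx1m := mul_lt_mul_of_pos_right hx1 hmR
        have hexp : (x₀ - 1 / (4 * mR)) * mR = x₀ * mR - 1 / 4 := by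
          rw [sub_mul, h14]
        rw [hexp] at hx1m
        have hx2m := mul_lt_mul_of_pos_right hx2 hmR
        have hlow : (j₀ : ℝ) - 1 / 4 < (x - (k₀ : ℝ)) * mR := by rw [hrng]; linarith
        have hhigh : (x - (k₀ : ℝ)) * mR < (j₀ : ℝ) := by rw [hrng]; linarith
        have h1 : (k₀ : ℝ) ≤ x := by
          have h0 : 0 < (x - (k₀:ℝ)) * mR := by linarith
          have := div_pos h0 hmR
          rw [mul_div_cancel_right₀ _ (ne_of_gt hmR)] at this
          linarith
        have h2 : x < (k₀ : ℝ) + 1 := by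
          have hlt' : (x - (k₀:ℝ)) * mR < mR := by linarith
          have := (mul_lt_iff_lt_one_left hmR).mp hlt'
          linarith
        have h3 : ((j₀ - 1 : ℤ) : ℝ) ≤ (x - (k₀ : ℝ)) * mR := by push_cast; linarith
        have h4 : (x - (k₀ : ℝ)) * mR < ((j₀ - 1 : ℤ) : ℝ) + 1 := by push_cast; linarith
        obtain ⟨hfl, hjx⟩ := cellEq mz x k₀ (j₀ - 1) h1 h2 h3 h4
        have hagx : ag mz x = (k₀ : ℝ) + ((j₀ : ℝ) - 1) / mR := by
          rw [ag, hfl, hjx]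
          push_cast
          rw [← hmRdef]
        have hbgx : bg mz x = x₀ := by
          rw [bg, hfl, hagx, add_assoc, ← add_div, sub_add_cancel, hx₀eq]
        have hTone : T ((mz ⌊x⌋ : ℝ) * (x - ag mz x)) = 1 := by
          apply hT1
          rw [hfl, hagx, ← hmRdef]
          have hexp2 : mR * (x - ((k₀ : ℝ) + ((j₀ : ℝ) - 1) / mR))
              = (x - (k₀ : ℝ)) * mR - ((j₀ : ℝ) - 1) := by
            field_simp
            ring
          rw [hexp2]
          linarith
        rw [yg, hTone, hbgx]
        ring
    obtain ⟨η, hη, hL⟩ := hleft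
    have hpos4 : (0:ℝ) < 1 / (4 * mR) := by positivity
    filter_upwards [Ioo_mem_nhds (by linarith : x₀ - η < x₀)
      (by linarith : x₀ < x₀ + 1 / (4 * mR))] with x hx
    rcases lt_or_ge x x₀ with h | h
    · exact hL x hx.1 h
    · exact hright x h hx.2
  · -- interior of a cell
    left
    filter_upwards [Ioo_mem_nhds hlt (bg_gt mz hm x₀)] with x hx
    have h1 : (k₀:ℝ) ≤ x := le_of_lt (lt_of_le_of_lt (ag_ge mz hm x₀) hx.1)
    have h2 : x < (k₀:ℝ) + 1 := lt_of_lt_of_le hx.2 (bg_le mz hm x₀)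
    have hagdef : ag mz x₀ = (k₀ : ℝ) + (j₀ : ℝ) / mR := rfl
    have hbgdef : bg mz x₀ = ag mz x₀ + 1 / mR := rfl
    have h3 : (j₀ : ℝ) ≤ (x - (k₀:ℝ)) * mR := by
      have : (k₀ : ℝ) + (j₀ : ℝ) / mR < x := hagdef ▸ hx.1
      have h' : (j₀ : ℝ) / mR < x - (k₀ : ℝ) := by linarith
      have := (div_lt_iff₀ hmR).mp h'
      linarith
    have h4 : (x - (k₀:ℝ)) * mR < (j₀ : ℝ) + 1 := by
      have : x < (k₀ : ℝ) + (j₀ : ℝ) / mR + 1 / mR := by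
        have := hx.2
        rw [hbgdef, hagdef] at this
        linarith
      have h' : x - (k₀ : ℝ) < ((j₀ : ℝ) + 1) / mR := by
        rw [add_div]
        linarith
      have := (lt_div_iff₀ hmR).mp h'
      linarith
    obtain ⟨hfl, hjx⟩ := cellEq mz x k₀ j₀ h1 h2 h3 h4
    have hagx : ag mz x = ag mz x₀ := by rw [ag, ag, hfl, hjx]
    have hbgx : bg mz x = bg mz x₀ := by rw [bg, bg, hagx, hfl]
    rw [yg, hagx, hbgx, hfl]
    have harg : mR * (x - ag mz x₀) = mR * x + (-(mR * ag mz x₀)) := by ring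
    rw [← hmRdef, harg]

lemma yg_approx (ε : ℝ → ℝ) (hT01 : ∀ x, T x ∈ Icc (0:ℝ) 1)
    (happ : ∀ k : ℤ, ∀ s t : ℝ, s ∈ Icc (k:ℝ) ((k:ℝ)+1) → t ∈ Icc (k:ℝ) ((k:ℝ)+1) →
      |s - t| ≤ 1/(mz k : ℝ) → |φ s - φ t| < ε t)
    (t : ℝ) : |yg mz φ T t - φ t| < ε t := by
  set k : ℤ := ⌊t⌋ with hk
  have hmR : (0:ℝ) < (mz k : ℝ) := mzR_pos mz hm k
  have hfl : (k:ℝ) ≤ t := Int.floor_le t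
  have hfl2 : t < (k:ℝ) + 1 := by
    have := Int.lt_floor_add_one t
    push_cast at this ⊢
    linarith
  have hag1 := ag_ge mz hm t
  have hag2 := ag_le mz hm t
  have hbg1 := bg_gt mz hm t
  have hbg2 := bg_le mz hm t
  have hdiff : bg mz t - ag mz t = 1 / (mz k : ℝ) := by rw [bg]; ring
  have hsa : |ag mz t - t| ≤ 1 / (mz k : ℝ) := by
    rw [abs_of_nonpos (by linarith)]
    linarith
  have hsb : |bg mz t - t| ≤ 1 / (mz k : ℝ) := by
    rw [abs_of_nonneg (by linarith)]
    linarith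
  have hA := happ k (ag mz t) t ⟨hag1, by linarith⟩ ⟨hfl, by linarith⟩ hsa
  have hB := happ k (bg mz t) t ⟨by linarith, by linarith⟩ ⟨hfl, by linarith⟩ hsb
  obtain ⟨hs0, hs1⟩ := hT01 ((mz ⌊t⌋ : ℝ) * (t - ag mz t))
  set s : ℝ := T ((mz ⌊t⌋ : ℝ) * (t - ag mz t)) with hsdef
  have hdecomp : yg mz φ T t - φ t
      = (1 - s) * (φ (ag mz t) - φ t) + s * (φ (bg mz t) - φ t) := by
    rw [yg]
    ring
  set A := |φ (ag mz t) - φ t|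
  set B := |φ (bg mz t) - φ t|
  have hstep : |yg mz φ T t - φ t| ≤ (1 - s) * A + s * B := by
    rw [hdecomp]
    refine (abs_add_le _ _).trans ?_
    rw [abs_mul, abs_mul, abs_of_nonneg (by linarith), abs_of_nonneg hs0]
  have hmaxA : A ≤ max A B := le_max_left _ _
  have hmaxB : B ≤ max A B := le_max_right _ _
  have h1 : (1 - s) * A ≤ (1 - s) * max A B := by
    apply mul_le_mul_of_nonneg_left hmaxA (by linarith)
  have h2 : s * B ≤ s * max A B := mul_le_mul_of_nonneg_left hmaxB hs0
  have hmax : |yg mz φ T t - φ t| ≤ max A B := by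
    have : (1 - s) * max A B + s * max A B = max A B := by ring
    linarith
  exact lt_of_le_of_lt hmax (max_lt hA hB)

end glue

end Stmt16

open Stmt16 in
theorem stmt_16 (φ ε : ℝ → ℝ) (hφ : Continuous φ) (hε : Continuous ε)
    (hεpos : ∀ t, 0 < ε t) (n : ℤ) (hn : 3 < n) :
    ∃ y : ℝ → ℝ, ContDiff ℝ 4 y ∧
      (∀ x, iteratedDeriv 4 y x * deriv y x ^ 2
        - 3 * iteratedDeriv 3 y x * iteratedDeriv 2 y x * deriv y x
        + 2 * (1 - ((n : ℝ) ^ 2)⁻¹) * iteratedDeriv 2 y x ^ 3 = 0) ∧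
      (∀ t, |y t - φ t| < ε t) := by
  classical
  set M : ℕ := (n - 4).toNat with hM
  have hncast : (n : ℝ) = (M : ℝ) + 4 := by
    have h4 : (0:ℤ) ≤ n - 4 := by omega
    have h5 : ((M : ℤ) : ℝ) = ((n - 4 : ℤ) : ℝ) := by
      rw [hM, Int.toNat_of_nonneg h4]
    push_cast at h5 ⊢
    linarith
  obtain ⟨T, hT4, hTode, hT0, hT1, hT01⟩ := exists_T M
  -- choose an adaptive grid resolution on each interval [k, k+1]
  have key : ∀ k : ℤ, ∃ mm : ℕ, 0 < mm ∧ ∀ s t : ℝ,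
      s ∈ Set.Icc (k:ℝ) ((k:ℝ)+1) → t ∈ Set.Icc (k:ℝ) ((k:ℝ)+1) →
      |s - t| ≤ 1/(mm : ℝ) → |φ s - φ t| < ε t := by
    intro k
    obtain ⟨t₀, ht₀mem, ht₀min⟩ := isCompact_Icc.exists_isMinOn
      (Set.nonempty_Icc.mpr (by linarith)) (hε.continuousOn (s := Set.Icc (k:ℝ) ((k:ℝ)+1)))
    have hc : 0 < ε t₀ := hεpos t₀
    have hu := isCompact_Icc.uniformContinuousOn_of_continuous
      (hφ.continuousOn (s := Set.Icc (k:ℝ) ((k:ℝ)+1)))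
    rw [Metric.uniformContinuousOn_iff] at hu
    obtain ⟨δ, hδ, hδ'⟩ := hu (ε t₀ / 2) (by linarith)
    obtain ⟨mm, hmm⟩ := exists_nat_one_div_lt hδ
    refine ⟨mm + 1, Nat.succ_pos _, ?_⟩
    intro s t hs ht hst
    have hdist : dist s t < δ := by
      rw [Real.dist_eq]
      have : (1:ℝ)/((mm:ℝ)+1) < δ := hmm
      calc |s - t| ≤ 1/((mm+1 : ℕ) : ℝ) := hst
      _ = 1/((mm:ℝ)+1) := by push_cast; ring_nf
      _ < δ := this
    have := hδ' s hs t ht hdist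
    rw [Real.dist_eq] at this
    have hmin : ε t₀ ≤ ε t := ht₀min ht
    linarith
  choose mz hmpos happ using key
  refine ⟨yg mz φ T, ?_, ?_, ?_⟩
  · -- smoothness
    rw [contDiff_iff_contDiffAt]
    intro x₀
    rcases yg_loc mz φ T hmpos hT0 hT1 x₀ with h | h
    · exact ((transport T hT4 _ hTode (φ (ag mz x₀)) (φ (bg mz x₀) - φ (ag mz x₀))
        ((mz ⌊x₀⌋ : ℝ)) (-((mz ⌊x₀⌋ : ℝ) * ag mz x₀))).1.contDiffAt).congr_of_eventuallyEq h
    · exact contDiffAt_const.congr_of_eventuallyEq h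
  · -- the differential equation
    intro x
    rw [hncast]
    rcases yg_loc mz φ T hmpos hT0 hT1 x with h | h
    · rw [Filter.EventuallyEq.iteratedDeriv_eq 4 h, Filter.EventuallyEq.iteratedDeriv_eq 3 h,
        Filter.EventuallyEq.iteratedDeriv_eq 2 h, h.deriv_eq]
      exact (transport T hT4 _ hTode (φ (ag mz x)) (φ (bg mz x) - φ (ag mz x))
        ((mz ⌊x⌋ : ℝ)) (-((mz ⌊x⌋ : ℝ) * ag mz x))).2 x
    · rw [Filter.EventuallyEq.iteratedDeriv_eq 4 h, Filter.EventuallyEq.iteratedDeriv_eq 3 h,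
        Filter.EventuallyEq.iteratedDeriv_eq 2 h, h.deriv_eq, deriv_const,
        iteratedDeriv_const' 4 (by omega), iteratedDeriv_const' 3 (by omega),
        iteratedDeriv_const' 2 (by omega)]
      ring
  · -- approximation
    intro t
    exact yg_approx mz φ T hmpos ε hT01 happ t
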